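/- arXiv:1412.6353 — 5 statements merged into one kernel-verified Lean document; each statement's English description precedes it below -/
import Mathlib

section
/- If a is a right Engel element of a group G (i.e., for every g in G there exists n ≥ 1 with [a, g, g, ..., g] = 1, where g appears n times), then a⁻¹ is a left Engel element of G (i.e., for every g in G there exists m ≥ 1 with [g, a⁻¹, a⁻¹, ..., a⁻¹] = 1, where a⁻¹ appears m times). -/
/-
Write `xᵍ = g⁻¹ x g`. Since `[g, a⁻¹] = aᵍ a⁻¹` and `[x y, y, …, y] = [x, y, …, y]ʸ` as soon as
`y` occurs at least once, `[g, a⁻¹, …, a⁻¹]` with `n + 1` copies of `a⁻¹` is conjugate to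
`[aᵍ, a⁻¹, …, a⁻¹]` with `n` copies, i.e. to `[a, b, …, b]` for `b = g a⁻¹ g⁻¹`. The right Engel
property of `a` makes the latter trivial for some `n ≥ 1`.
-/

/-- Iterated Engel commutator: `engel x y n = [x, y, y, ..., y]` (n copies of y),
with the convention `[x, y] = x⁻¹ * y⁻¹ * x * y`. -/
def engel {G : Type*} [Group G] (x y : G) : ℕ → G
  | 0 => x
  | n + 1 => (engel x y n)⁻¹ * y⁻¹ * engel x y n * y

section Engel

variable {G : Type*} [Group G]

theorem engel_succ' (x y : G) (n : ℕ) : engel x y (n + 1) = engel (x⁻¹ * y⁻¹ * x * y) y n := by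
  induction n with
  | zero => rfl
  | succ n ih => rw [engel.eq_2 x y (n + 1), ih, engel.eq_2]

theorem map_engel {H F : Type*} [Group H] [FunLike F G H] [MonoidHomClass F G H] (f : F)
    (x y : G) (n : ℕ) :
    f (engel x y n) = engel (f x) (f y) n := by
  induction n with
  | zero => rfl
  | succ n ih => simp only [engel, map_mul, map_inv, ih]

theorem engel_mul_self_succ (x y : G) (n : ℕ) :
    engel (x * y) y (n + 1) = y⁻¹ * engel x y (n + 1) * y := by
  induction n with
  | zero => simp only [engel]; group
  | succ n ih => rw [engel.eq_2 x y (n + 1), engel.eq_2 (x * y), ih]; group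

end Engel

/-- If `a` is a right Engel element of `G`, then `a⁻¹` is a left Engel element of `G`. -/
theorem right_engel_inv_left_engel {G : Type*} [Group G] (a : G)
    (h : ∀ g : G, ∃ n ≥ 1, engel a g n = 1) :
    ∀ g : G, ∃ m ≥ 1, engel g a⁻¹ m = 1 := by
  intro g
  obtain ⟨n, hn, hcomm⟩ := h (g * a⁻¹ * g⁻¹)
  obtain ⟨k, rfl⟩ := Nat.exists_eq_add_of_le' hn
  have hconj : engel (g⁻¹ * a * g) a⁻¹ (k + 1) = g⁻¹ * engel a (g * a⁻¹ * g⁻¹) (k + 1) * g := by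
    simpa [mul_assoc] using (map_engel (MulAut.conj g⁻¹) a (g * a⁻¹ * g⁻¹) (k + 1)).symm
  refine ⟨k + 2, by omega, ?_⟩
  calc engel g a⁻¹ (k + 2)
      = engel (g⁻¹ * a * g * a⁻¹) a⁻¹ (k + 1) := by
        rw [engel_succ', inv_inv]
    _ = a * (g⁻¹ * engel a (g * a⁻¹ * g⁻¹) (k + 1) * g) * a⁻¹ := by
        rw [engel_mul_self_succ, inv_inv, hconj]
    _ = 1 := by rw [hcomm]; group
end

section
/- If G is a group and N is a finite normal subgroup of G of order m such that N is contained in Z_i(G) for some i ≥ 1 (i.e., N lies in the hypercentre), then N ≤ Z_m(G). -/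
/-!
Normality of `N` gives `⁅x, y⁆ ∈ N` for `x ∈ N`, so `N ⊓ Z_l ≤ Z_k` implies
`N ⊓ Z_{l+1} ≤ Z_{k+1}`. Hence once the chain `N ⊓ Z_k` fails to grow at one step it is
constant from then on, and since `N ≤ Z_i` its final value is `N`. Until then the chain grows
strictly, so `|N ⊓ Z_k| > k`, which cannot happen at `k = |N|`.
-/

open scoped commutatorElement

namespace Subgroup

variable {G : Type*} [Group G]

theorem card_lt_card_of_lt {H K : Subgroup G} [Finite K] (h : H < K) :
    Nat.card H < Nat.card K := by
  have := Set.ncard_lt_ncard (show (H : Set G) ⊂ K from h) (Set.toFinite _)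
  rwa [← Nat.card_coe_set_eq, ← Nat.card_coe_set_eq] at this

instance finite_inf_left (H K : Subgroup G) [Finite H] : Finite ↥(H ⊓ K) :=
  Finite.of_injective (inclusion inf_le_left) (inclusion_injective _)

variable {N : Subgroup G} [N.Normal]

theorem inf_upperCentralSeries_succ_le_succ {k l : ℕ}
    (h : N ⊓ upperCentralSeries G l ≤ upperCentralSeries G k) :
    N ⊓ upperCentralSeries G (l + 1) ≤ upperCentralSeries G (k + 1) := by
  rintro x ⟨hxN, hxZ⟩ y
  have hcomm : ⁅x, y⁆ ∈ N :=
    commutator_le_left N ⊤ (commutator_mem_commutator hxN (mem_top y))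
  exact h ⟨hcomm, hxZ y⟩

theorem inf_upperCentralSeries_le_of_succ_le {k : ℕ}
    (h : N ⊓ upperCentralSeries G (k + 1) ≤ upperCentralSeries G k) {l : ℕ} (hkl : k ≤ l) :
    N ⊓ upperCentralSeries G l ≤ upperCentralSeries G k := by
  induction l, hkl using Nat.le_induction with
  | base => exact inf_le_right
  | succ l hkl ih =>
    calc N ⊓ upperCentralSeries G (l + 1)
        ≤ N ⊓ upperCentralSeries G (k + 1) :=
          le_inf inf_le_left (inf_upperCentralSeries_succ_le_succ ih)
      _ ≤ upperCentralSeries G k := h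

theorem le_upperCentralSeries_of_succ_le {i k : ℕ} (hN : N ≤ upperCentralSeries G i)
    (h : N ⊓ upperCentralSeries G (k + 1) ≤ upperCentralSeries G k) :
    N ≤ upperCentralSeries G k :=
  calc N ≤ N ⊓ upperCentralSeries G (max i k) :=
        le_inf le_rfl (hN.trans (upperCentralSeries_mono G (le_max_left i k)))
    _ ≤ upperCentralSeries G k := inf_upperCentralSeries_le_of_succ_le h (le_max_right i k)

theorem inf_upperCentralSeries_lt_succ {i k : ℕ} (hN : N ≤ upperCentralSeries G i)
    (hk : ¬N ≤ upperCentralSeries G k) :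
    N ⊓ upperCentralSeries G k < N ⊓ upperCentralSeries G (k + 1) := by
  refine lt_of_le_not_ge (inf_le_inf_left N (upperCentralSeries_mono G k.le_succ)) fun h => ?_
  exact hk (le_upperCentralSeries_of_succ_le hN (h.trans inf_le_right))

theorem lt_card_inf_upperCentralSeries_or_le [Finite N] {i : ℕ}
    (hN : N ≤ upperCentralSeries G i) (k : ℕ) :
    k < Nat.card ↥(N ⊓ upperCentralSeries G k) ∨ N ≤ upperCentralSeries G k := by
  induction k with
  | zero => exact Or.inl Nat.card_pos
  | succ k ih =>
    by_cases hk : N ≤ upperCentralSeries G k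
    · exact Or.inr (hk.trans (upperCentralSeries_mono G k.le_succ))
    · have hcard := ih.resolve_right hk
      have hlt := card_lt_card_of_lt (inf_upperCentralSeries_lt_succ hN hk)
      exact Or.inl (by omega)

end Subgroup

theorem finite_normal_in_hypercentre_le_Zm_general {G : Type*} [Group G] (N : Subgroup G)
    (hN : N.Normal) (hfin : Finite N) (m : ℕ) (hm : Nat.card N = m)
    (i : ℕ) (hle : N ≤ upperCentralSeries G i) :
    N ≤ upperCentralSeries G m := by
  subst hm
  refine (Subgroup.lt_card_inf_upperCentralSeries_or_le hle _).resolve_left fun h => ?_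
  exact h.not_ge (Subgroup.card_le_of_le inf_le_left)

/-- A finite normal subgroup of order `m` contained in some term `Z_i(G)` (`i ≥ 1`) of the
upper central series is contained in `Z_m(G)`. -/
theorem finite_normal_in_hypercentre_le_Zm {G : Type*} [Group G] (N : Subgroup G)
    (hN : N.Normal) (hfin : Finite N) (m : ℕ) (hm : Nat.card N = m)
    (i : ℕ) (hi : 1 ≤ i) (hle : N ≤ upperCentralSeries G i) :
    N ≤ upperCentralSeries G m :=
  finite_normal_in_hypercentre_le_Zm_general N hN hfin m hm i hle
end

section
/- Let G be a group, a ∈ G, and suppose G = H·C, where H is a subgroup, C centralizes the normal closure N = a^G, and a ∈ Z_k(HN) with N ≤ HN. Then for all g₁, …, g_k ∈ G, the iterated commutator [a, g₁, …, g_k] = 1; in particular a ∈ Z_k(G). -/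
/-!
For `u` in the normal subgroup `N` and `g = h * c` with `h ∈ H`, `c ∈ C`, the element `c`
commutes with `h⁻¹ u h ∈ N`, so `[u, h c] = [u, h]`, which again lies in `N`. Hence every
`[a, g₁, …, gₖ]` equals some `[a, h₁, …, hₖ]` with all `hᵢ ∈ H`, a commutator computed inside
`HN`, where it vanishes because `a ∈ Z_k(HN)`. Vanishing of all `k`-fold commutators
characterizes `Z_k(G)`.
-/

section IteratedCommutator

variable {G : Type*} [Group G]

/-- `[x, g₁, …, gₖ]` with the convention `[x, g] = x⁻¹ g⁻¹ x g`; Mathlib's `⁅x, g⁆` is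
`x g x⁻¹ g⁻¹`. -/
def iteratedCommutator (x : G) (l : List G) : G :=
  l.foldl (fun u g => u⁻¹ * g⁻¹ * u * g) x

@[simp]
theorem iteratedCommutator_nil (x : G) : iteratedCommutator x [] = x := rfl

@[simp]
theorem iteratedCommutator_cons (x g : G) (l : List G) :
    iteratedCommutator x (g :: l) = iteratedCommutator (x⁻¹ * g⁻¹ * x * g) l := rfl

theorem map_iteratedCommutator {G' : Type*} [Group G'] (f : G →* G') (x : G) (l : List G) :
    f (iteratedCommutator x l) = iteratedCommutator (f x) (l.map f) := by
  induction l generalizing x with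
  | nil => rfl
  | cons g l ih => simp [ih]

theorem mem_upperCentralSeries_succ_iff_inv_mul_inv_mul {n : ℕ} {x : G} :
    x ∈ Subgroup.upperCentralSeries G (n + 1) ↔ ∀ y : G, x⁻¹ * y⁻¹ * x * y ∈ Subgroup.upperCentralSeries G n := by
  rw [← inv_mem_iff, Subgroup.mem_upperCentralSeries_succ_iff,
    ← (Equiv.inv G).forall_congr_right]
  simp only [Equiv.inv_apply, commutatorElement_def, inv_inv]

theorem mem_upperCentralSeries_iff_iteratedCommutator_eq_one {n : ℕ} {x : G} :
    x ∈ Subgroup.upperCentralSeries G n ↔ ∀ l : List G, l.length = n → iteratedCommutator x l = 1 := by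
  induction n generalizing x with
  | zero => simp [Subgroup.upperCentralSeries_zero]
  | succ n ih =>
    simp only [mem_upperCentralSeries_succ_iff_inv_mul_inv_mul, ih]
    constructor
    · rintro h (_ | ⟨y, l⟩) hl
      · simp at hl
      · exact h y l (by simpa using hl)
    · exact fun h y l hl => h (y :: l) (by simp [hl])

theorem inv_mul_inv_mul_mul_of_mem_of_centralizes {N : Subgroup G} [N.Normal] {u c : G} (h : G)
    (hu : u ∈ N) (hc : ∀ y ∈ N, c * y = y * c) :
    u⁻¹ * (h * c)⁻¹ * u * (h * c) = u⁻¹ * h⁻¹ * u * h := by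
  have hconj : h⁻¹ * u * h ∈ N := by simpa using Subgroup.Normal.conj_mem ‹_› u hu h⁻¹
  calc u⁻¹ * (h * c)⁻¹ * u * (h * c) = u⁻¹ * c⁻¹ * ((h⁻¹ * u * h) * c) := by group
    _ = u⁻¹ * c⁻¹ * (c * (h⁻¹ * u * h)) := by rw [hc _ hconj]
    _ = u⁻¹ * h⁻¹ * u * h := by group

theorem iteratedCommutator_map_eq {N : Subgroup G} [N.Normal] (f : G → G)
    (hf : ∀ u ∈ N, ∀ g, u⁻¹ * (f g)⁻¹ * u * f g = u⁻¹ * g⁻¹ * u * g) {u : G} (hu : u ∈ N)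
    (l : List G) : iteratedCommutator u (l.map f) = iteratedCommutator u l := by
  induction l generalizing u with
  | nil => rfl
  | cons g l ih =>
    have hcomm : u⁻¹ * g⁻¹ * u * g ∈ N := by
      simpa [mul_assoc] using mul_mem (inv_mem hu) (Subgroup.Normal.conj_mem ‹_› u hu g⁻¹)
    simp only [List.map_cons, iteratedCommutator_cons, hf u hu g, ih hcomm]

end IteratedCommutator

/-- If `G = H·C` where `C` centralizes the normal closure `N = a^G`, and `a ∈ Z_k(HN)`,
then `[a, g₁, …, g_k] = 1` for all `g₁, …, g_k ∈ G`; in particular `a ∈ Z_k(G)`. -/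
theorem engel_from_local_upper_central {G : Type*} [Group G] (a : G) (H C : Subgroup G)
    (k : ℕ) (N : Subgroup G) (hN : N = Subgroup.normalClosure ({a} : Set G))
    (hHC : ∀ g : G, ∃ h ∈ H, ∃ c ∈ C, g = h * c)
    (hcent : ∀ c ∈ C, ∀ y ∈ N, c * y = y * c)
    (haN : a ∈ N)
    (haZ : (⟨a, (le_sup_right : N ≤ H ⊔ N) haN⟩ : ↥(H ⊔ N)) ∈
      upperCentralSeries ↥(H ⊔ N) k) :
    (∀ gs : Fin k → G,
      (List.ofFn gs).foldl (fun u g => u⁻¹ * g⁻¹ * u * g) a = 1) ∧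
    a ∈ upperCentralSeries G k := by
  have : N.Normal := hN ▸ Subgroup.normalClosure_normal
  choose π hπH c hcC hπ using hHC
  have hπ_comm : ∀ u ∈ N, ∀ g, u⁻¹ * (π g)⁻¹ * u * π g = u⁻¹ * g⁻¹ * u * g := fun u hu g => by
    conv_rhs => rw [hπ g]
    exact (inv_mul_inv_mul_mul_of_mem_of_centralizes _ hu (hcent _ (hcC g))).symm
  have hvanish : ∀ l : List G, l.length = k → iteratedCommutator a l = 1 := by
    intro l hl
    let lift : G → ↥(H ⊔ N) := fun g => ⟨π g, le_sup_left (a := H) (hπH g)⟩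
    have hHN := mem_upperCentralSeries_iff_iteratedCommutator_eq_one.1 haZ (l.map lift)
      (by simp [hl])
    have hG := congrArg (H ⊔ N).subtype hHN
    rw [map_iteratedCommutator, List.map_map] at hG
    rw [← iteratedCommutator_map_eq π hπ_comm haN]
    simpa [Function.comp_def, lift] using hG
  exact ⟨fun gs => hvanish _ (List.length_ofFn),
    mem_upperCentralSeries_iff_iteratedCommutator_eq_one.2 hvanish⟩
end

section
/- Let G be a group such that G/Z(G) is finite of order m. Then G is nilpotent-by-finite; moreover, if additionally every right Engel element of every finite group lies in a finite term of its upper central series, then the set of right Engel elements of G is a subgroup of G contained in Z_ω(G). -/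
def IsRightEngel {G : Type*} [Group G] (a : G) : Prop :=
  ∀ g : G, ∃ n ≥ 1, engel a g n = 1

def hypercenter (G : Type*) [Group G] : Subgroup G :=
  ⨆ k, Subgroup.upperCentralSeries G k

section

variable {G : Type*} [Group G]

lemma map_engel_s15 {H : Type*} [Group H] (φ : G →* H) (a g : G) :
    ∀ n, φ (engel a g n) = engel (φ a) (φ g) n
  | 0 => rfl
  | n + 1 => by simp [engel, map_engel_s15 φ a g n]

lemma engel_succ (a g : G) : ∀ n, engel a g (n + 1) = engel (a⁻¹ * g⁻¹ * a * g) g n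
  | 0 => rfl
  | n + 1 => by
    change (engel a g (n + 1))⁻¹ * g⁻¹ * engel a g (n + 1) * g = _
    rw [engel_succ a g n]
    rfl

lemma engel_eq_one_of_mem_upperCentralSeries :
    ∀ {k : ℕ} {a : G}, a ∈ Subgroup.upperCentralSeries G k → ∀ g : G, engel a g k = 1
  | 0, a, ha, _ => by simpa [engel] using ha
  | k + 1, a, ha, g => by
    have hcomm := (Subgroup.mem_upperCentralSeries_succ_iff.mp (inv_mem ha)) g⁻¹
    rw [commutatorElement_def, inv_inv, inv_inv] at hcomm
    rw [engel_succ]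
    exact engel_eq_one_of_mem_upperCentralSeries hcomm g

lemma isRightEngel_of_mem_upperCentralSeries {k : ℕ} {a : G}
    (ha : a ∈ Subgroup.upperCentralSeries G k) : IsRightEngel a := fun g =>
  ⟨k + 1, Nat.le_add_left 1 k,
    engel_eq_one_of_mem_upperCentralSeries (Subgroup.upperCentralSeries_mono G k.le_succ ha) g⟩

lemma IsRightEngel.map_of_surjective {H : Type*} [Group H] {φ : G →* H}
    (hφ : Function.Surjective φ) {a : G} (ha : IsRightEngel a) : IsRightEngel (φ a) := by
  intro h
  obtain ⟨g, rfl⟩ := hφ h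
  obtain ⟨n, hn, hng⟩ := ha g
  exact ⟨n, hn, by rw [← map_engel_s15, hng, map_one]⟩

lemma MulEquiv.map_mem_upperCentralSeries_iff {H : Type*} [Group H] (e : G ≃* H)
    {a : G} {k : ℕ} :
    e a ∈ Subgroup.upperCentralSeries H k ↔ a ∈ Subgroup.upperCentralSeries G k := by
  rw [← Subgroup.comap_upperCentralSeries e k]
  rfl

lemma mk_mem_upperCentralSeries_quotient_center_iff {a : G} {k : ℕ} :
    (a : G ⧸ Subgroup.center G) ∈ Subgroup.upperCentralSeries (G ⧸ Subgroup.center G) k ↔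
      a ∈ Subgroup.upperCentralSeries G (k + 1) := by
  rw [← Subgroup.comap_upperCentralSeries_quotient_center k]
  rfl

lemma coe_hypercenter :
    (hypercenter G : Set G) = ⋃ k, (Subgroup.upperCentralSeries G k : Set G) :=
  Subgroup.coe_iSup_of_directed (Subgroup.upperCentralSeries_mono G).directed_le

end

theorem isRightEngel_iff_mem_hypercenter {G : Type*} [Group G] [Finite (G ⧸ Subgroup.center G)]
    (hfinite : ∀ (H : Type) [Group H] [Finite H] (a : H),
      IsRightEngel a → ∃ k, a ∈ Subgroup.upperCentralSeries H k) (a : G) :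
    IsRightEngel a ↔ a ∈ hypercenter G := by
  rw [← SetLike.mem_coe, coe_hypercenter, Set.mem_iUnion]
  refine ⟨fun ha => ?_, fun ⟨k, hk⟩ => isRightEngel_of_mem_upperCentralSeries hk⟩
  -- The hypothesis only speaks of groups in `Type`, so transport `G/Z(G)` there first.
  obtain ⟨H, _, _, ⟨e⟩⟩ :=
    Finite.exists_type_univ_nonempty_mulEquiv.{_, 0} (G ⧸ Subgroup.center G)
  have hsurj :
      Function.Surjective (e.toMonoidHom.comp (QuotientGroup.mk' (Subgroup.center G))) :=
    e.surjective.comp (QuotientGroup.mk'_surjective _)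
  obtain ⟨k, hk⟩ := hfinite H _ (ha.map_of_surjective hsurj)
  exact ⟨k + 1, mk_mem_upperCentralSeries_quotient_center_iff.mp
    (e.map_mem_upperCentralSeries_iff.mp hk)⟩

theorem central_by_finite_engel_general {G : Type*} [Group G]
    (hfin : Finite (G ⧸ Subgroup.center G)) :
    (∃ N : Subgroup G, N.Normal ∧ Group.IsNilpotent N ∧ Finite (G ⧸ N)) ∧
    ((∀ (H : Type) [Group H] [Finite H] (a : H),
        (∀ g : H, ∃ n ≥ 1, engel a g n = 1) → ∃ k, a ∈ upperCentralSeries H k) →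
      ∃ S : Subgroup G, (S : Set G) = {a : G | ∀ g : G, ∃ n ≥ 1, engel a g n = 1} ∧
        (S : Set G) ⊆ ⋃ k : ℕ, (upperCentralSeries G k : Set G)) := by
  have hcenter_nilpotent : Group.IsNilpotent (Subgroup.center G) := by
    open IsMulCommutative in infer_instance
  refine ⟨⟨Subgroup.center G, inferInstance, hcenter_nilpotent, hfin⟩, fun hfinite => ?_⟩
  refine ⟨hypercenter G, ?_, coe_hypercenter.subset⟩
  ext a
  exact (isRightEngel_iff_mem_hypercenter hfinite a).symm

/-- If `G/Z(G)` is finite of order `m`, then `G` is nilpotent-by-finite; moreover, if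
every right Engel element of every finite group lies in a finite term of its upper
central series, then the right Engel elements of `G` form a subgroup contained in
`Z_ω(G)`. -/
theorem central_by_finite_engel {G : Type*} [Group G] (m : ℕ)
    (hfin : Finite (G ⧸ Subgroup.center G))
    (hm : Nat.card (G ⧸ Subgroup.center G) = m) :
    (∃ N : Subgroup G, N.Normal ∧ Group.IsNilpotent N ∧ Finite (G ⧸ N)) ∧
    ((∀ (H : Type) [Group H] [Finite H] (a : H),
        (∀ g : H, ∃ n ≥ 1, engel a g n = 1) → ∃ k, a ∈ upperCentralSeries H k) →
      ∃ S : Subgroup G, (S : Set G) = {a : G | ∀ g : G, ∃ n ≥ 1, engel a g n = 1} ∧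
        (S : Set G) ⊆ ⋃ k : ℕ, (upperCentralSeries G k : Set G)) :=
  central_by_finite_engel_general hfin
end

section
/- Let p be an odd prime, n ≥ 2, and P = ⟨a, b | a^{p^n} = b^{p^{n-1}} = 1, a^b = a^{1+p}⟩. Then a ∈ Z_n(P) and the commutator [a,b] = a^p lies in Z_{n-1}(P). -/
/-!
Conjugation by `b` raises powers of `a` to the `(1 + p)`-th power, so `⁅a ^ m, b⁆` is a
conjugate of `a ^ (p * m)`, while `a ^ m` commutes with `a`. As `a` and `b` generate the group,
`a ^ m` lies in `Z_{k+1}` as soon as `a ^ (p * m)` lies in `Z_k`. Starting from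
`a ^ p ^ n = 1 ∈ Z_0` and peeling off one factor `p` at a time gives `a ∈ Z_n` and
`a ^ p ∈ Z_{n-1}`.
-/

/-- Relations for the metacyclic group `⟨a, b | a^{p^n} = 1, b^{p^{n-1}} = 1, a^b = a^{1+p}⟩`,
with `a` the generator `0` and `b` the generator `1`. -/
def metacyclicRels (p n : ℕ) : Set (FreeGroup (Fin 2)) :=
  {FreeGroup.of 0 ^ p ^ n, FreeGroup.of 1 ^ p ^ (n - 1),
    (FreeGroup.of 1)⁻¹ * FreeGroup.of 0 * FreeGroup.of 1 * (FreeGroup.of 0 ^ (1 + p))⁻¹}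

/-- The metacyclic `p`-group `P = ⟨a, b | a^{p^n} = 1, b^{p^{n-1}} = 1, a^b = a^{1+p}⟩`. -/
abbrev MetacyclicP (p n : ℕ) : Type := PresentedGroup (metacyclicRels p n)

open scoped commutatorElement

namespace Subgroup

theorem mem_upperCentralSeries_succ_of_closure_eq_top {G : Type*} [Group G] {S : Set G}
    (hS : closure S = ⊤) {k : ℕ} {x : G}
    (hx : ∀ s ∈ S, ⁅x, s⁆ ∈ upperCentralSeries G k) :
    x ∈ upperCentralSeries G (k + 1) := by
  set π := QuotientGroup.mk' (upperCentralSeries G k)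
  have hcomm : ∀ y, ⁅x, y⁆ ∈ upperCentralSeries G k ↔
      y ∈ (centralizer {π x}).comap π := by
    intro y
    rw [mem_comap, mem_centralizer_singleton_iff, eq_comm,
      ← commutatorElement_eq_one_iff_mul_comm, ← map_commutatorElement, QuotientGroup.mk'_apply,
      QuotientGroup.eq_one_iff]
  have hle : closure S ≤ (centralizer {π x}).comap π :=
    closure_le _ |>.2 fun s hs ↦ (hcomm s).1 (hx s hs)
  exact fun y ↦ (hcomm y).2 (hle (hS ▸ mem_top y))

end Subgroup

section Metacyclic

variable {G : Type*} [Group G] {a b : G} {p : ℕ}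

theorem inv_mul_inv_mul_mul_eq_pow (hconj : b⁻¹ * a * b = a ^ (1 + p)) :
    a⁻¹ * b⁻¹ * a * b = a ^ p := by
  rw [mul_assoc a⁻¹, mul_assoc a⁻¹, hconj, pow_add, pow_one, inv_mul_cancel_left]

theorem commutatorElement_pow_left (hconj : b⁻¹ * a * b = a ^ (1 + p)) (m : ℕ) :
    ⁅a ^ m, b⁆ = b * a ^ (p * m) * b⁻¹ := by
  have hconj_pow : b⁻¹ * a ^ m * b = a ^ (p * m) * a ^ m := by
    have hpow_conj := conj_pow (a := b⁻¹) (b := a) (i := m)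
    rw [inv_inv] at hpow_conj
    rw [← hpow_conj, hconj, ← pow_mul, ← pow_add]
    ring_nf
  calc ⁅a ^ m, b⁆ = b * (b⁻¹ * a ^ m * b) * (a ^ m)⁻¹ * b⁻¹ := by group
    _ = b * a ^ (p * m) * b⁻¹ := by rw [hconj_pow]; group

namespace Subgroup

theorem pow_mem_upperCentralSeries_succ (hgen : closure {a, b} = ⊤)
    (hconj : b⁻¹ * a * b = a ^ (1 + p)) {m k : ℕ}
    (h : a ^ (p * m) ∈ upperCentralSeries G k) :
    a ^ m ∈ upperCentralSeries G (k + 1) := by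
  refine mem_upperCentralSeries_succ_of_closure_eq_top hgen ?_
  rintro s (rfl | rfl)
  · rw [commutatorElement_eq_one_iff_mul_comm.2 ((Commute.refl s).pow_left m)]
    exact one_mem _
  · rw [commutatorElement_pow_left hconj]
    exact Normal.conj_mem inferInstance _ h s

theorem pow_mem_upperCentralSeries_add (hgen : closure {a, b} = ⊤)
    (hconj : b⁻¹ * a * b = a ^ (1 + p)) {m k : ℕ} (j : ℕ)
    (h : a ^ (p ^ j * m) ∈ upperCentralSeries G k) : a ^ m ∈ upperCentralSeries G (k + j) := by
  induction j generalizing m with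
  | zero => simpa using h
  | succ j ih =>
    rw [pow_succ, mul_assoc] at h
    exact pow_mem_upperCentralSeries_succ hgen hconj (ih h)

end Subgroup

end Metacyclic

theorem MetacyclicP.closure_eq_top (p n : ℕ) :
    Subgroup.closure {(PresentedGroup.of 0 : MetacyclicP p n), PresentedGroup.of 1} = ⊤ := by
  rw [← PresentedGroup.closure_range_of]
  congr 1
  ext
  simp [Fin.exists_fin_two, eq_comm]

theorem metacyclic_upper_central_general (p n : ℕ) (hn : 2 ≤ n) :
    (PresentedGroup.of 0 : MetacyclicP p n) ∈ upperCentralSeries (MetacyclicP p n) n ∧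
    ((PresentedGroup.of 0 : MetacyclicP p n)⁻¹ * (PresentedGroup.of 1)⁻¹ *
        PresentedGroup.of 0 * PresentedGroup.of 1 =
      (PresentedGroup.of 0 : MetacyclicP p n) ^ p) ∧
    ((PresentedGroup.of 0 : MetacyclicP p n)⁻¹ * (PresentedGroup.of 1)⁻¹ *
        PresentedGroup.of 0 * PresentedGroup.of 1) ∈
      upperCentralSeries (MetacyclicP p n) (n - 1) := by
  have hord : (PresentedGroup.of 0 : MetacyclicP p n) ^ p ^ n = 1 :=
    PresentedGroup.one_of_mem (Or.inl rfl)
  have hconj : (PresentedGroup.of 1 : MetacyclicP p n)⁻¹ * PresentedGroup.of 0 *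
      PresentedGroup.of 1 = PresentedGroup.of 0 ^ (1 + p) :=
    PresentedGroup.mk_eq_mk_of_mul_inv_mem (Or.inr (Or.inr rfl))
  have hcomm := inv_mul_inv_mul_mul_eq_pow hconj
  have hgen := MetacyclicP.closure_eq_top p n
  have ha : PresentedGroup.of 0 ∈ Subgroup.upperCentralSeries (MetacyclicP p n) n := by
    simpa using Subgroup.pow_mem_upperCentralSeries_add hgen hconj (m := 1) (k := 0) n
      (by simp [hord])
  have hap : PresentedGroup.of 0 ^ p ∈ Subgroup.upperCentralSeries (MetacyclicP p n) (n - 1) := by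
    simpa using Subgroup.pow_mem_upperCentralSeries_add hgen hconj (m := p) (k := 0) (n - 1)
      (by rw [← pow_succ, Nat.sub_add_cancel (by omega), hord]; exact Subgroup.one_mem _)
  exact ⟨ha, hcomm, hcomm ▸ hap⟩

/-- For `p` an odd prime and `n ≥ 2`, in `P` one has `a ∈ Z_n(P)` and
`[a,b] = a^p ∈ Z_{n-1}(P)` (with the convention `[a,b] = a⁻¹b⁻¹ab`). -/
theorem metacyclic_upper_central (p n : ℕ) (hp : p.Prime) (hodd : Odd p) (hn : 2 ≤ n) :
    (PresentedGroup.of 0 : MetacyclicP p n) ∈ upperCentralSeries (MetacyclicP p n) n ∧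
    ((PresentedGroup.of 0 : MetacyclicP p n)⁻¹ * (PresentedGroup.of 1)⁻¹ *
        PresentedGroup.of 0 * PresentedGroup.of 1 =
      (PresentedGroup.of 0 : MetacyclicP p n) ^ p) ∧
    ((PresentedGroup.of 0 : MetacyclicP p n)⁻¹ * (PresentedGroup.of 1)⁻¹ *
        PresentedGroup.of 0 * PresentedGroup.of 1) ∈
      upperCentralSeries (MetacyclicP p n) (n - 1) :=
  metacyclic_upper_central_general p n hn
end
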